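/- Let ψ₁, ψ₂ ∈ L²(ℝ) be band-limited with: ψ̂₁ ∈ C^∞, supp ψ̂₁ ⊆ [−4,−1/2] ∪ [1/2,4], Σ_{j≥0} |ψ̂₁(2^{-j}ξ)|² = 1 for |ξ| ≥ 1; ψ̂₂ ∈ C^∞, supp ψ̂₂ ⊆ [−1,1], Σ_{l=−1}^1 |ψ̂₂(ξ+l)|² = 1 for |ξ| ≤ 1. Define ψ̂(ξ) = ψ̂₁(ξ₁) ψ̂₂(ξ₂/ξ₁) ψ̂₂(ξ₃/ξ₁) for ξ ∈ ℝ³. Then for all ξ = (ξ₁,ξ₂,ξ₃) in the pyramid P = {|ξ₁| ≥ 1, |ξ₂/ξ₁| ≤ 1, |ξ₃/ξ₁| ≤ 1}, Σ_{j≥0} Σ_{k₁,k₂=−⌈2^{j/2}⌉}^{⌈2^{j/2}⌉} |ψ̂(S_k^T A_{2^j}^{-1} ξ)|² = 1, where A_{2^j} = diag(2^j, 2^{j/2}, 2^{j/2}) and S_k is the shear matrix with first row (1, k₁, k₂). -/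

import Mathlib

/-- A continuous function vanishing outside `[-1,1]` also vanishes at the endpoints,
hence on all of `{x : 1 ≤ |x|}`. -/
theorem aux_g2_vanish (g2 : ℝ → ℂ) (hc2 : ContDiff ℝ (⊤ : ℕ∞) g2)
    (hsupp2 : ∀ ξ : ℝ, ξ ∉ Set.Icc (-1 : ℝ) 1 → g2 ξ = 0) :
    ∀ x : ℝ, 1 ≤ |x| → g2 x = 0 := by
  have hopen : ∀ y : ℝ, 1 < |y| → g2 y = 0 := by
    intro y hy
    apply hsupp2
    simp only [Set.mem_Icc, not_and_or, not_le]
    rcases lt_abs.mp hy with h' | h'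
    · right; linarith
    · left; linarith
  intro x hx
  rcases eq_or_lt_of_le hx with h | h
  · have hcont : Continuous g2 := hc2.continuous
    have hseq : Filter.Tendsto (fun n : ℕ => g2 ((1 + 1/(n+1 : ℝ)) * x)) Filter.atTop (nhds (g2 x)) := by
      apply hcont.continuousAt.tendsto.comp
      have h2 : Filter.Tendsto (fun n : ℕ => (1 + 1/(n+1 : ℝ)) * x) Filter.atTop (nhds (1 * x)) := by
        apply Filter.Tendsto.mul_const
        simpa using (tendsto_const_nhds (x := (1:ℝ))).add tendsto_one_div_add_atTop_nhds_zero_nat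
      simpa using h2
    have hzero : (fun n : ℕ => g2 ((1 + 1/(n+1 : ℝ)) * x)) = fun _ => 0 := by
      funext n
      apply hopen
      have h1 : (1:ℝ) < 1 + 1/(n+1:ℝ) := by
        have : (0:ℝ) < 1/(n+1:ℝ) := by positivity
        linarith
      rw [abs_mul, abs_of_pos (by linarith : (0:ℝ) < 1 + 1/(n+1:ℝ)), ← h]
      nlinarith [abs_nonneg x, h.symm ▸ hx]
    rw [hzero] at hseq
    exact tendsto_nhds_unique hseq
      ((tendsto_const_nhds : Filter.Tendsto (fun _ : ℕ => (0:ℂ)) Filter.atTop (nhds 0)))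
  · exact hopen x h

/-- Key shifted partition-of-unity identity: if `g2` vanishes on `{x : 1 ≤ |x|}` and the
three consecutive integer translates of `‖g2‖²` sum to `1` on `[-1,1]`, then for `|a| ≤ N`
the translates over `Icc (-N) N` sum to `1`. -/
theorem aux_keysum (g2 : ℝ → ℂ)
    (h0 : ∀ x : ℝ, 1 ≤ |x| → g2 x = 0)
    (hpart2 : ∀ ξ : ℝ, |ξ| ≤ 1 →
      ∑ l ∈ Finset.Icc (-1 : ℤ) 1, ‖g2 (ξ + (l : ℝ))‖ ^ 2 = 1)
    (N : ℤ) (a : ℝ) (ha : |a| ≤ N) :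
    ∑ k ∈ Finset.Icc (-N) N, ‖g2 (a + (k : ℝ))‖ ^ 2 = 1 := by
  set m : ℤ := round a with hm
  have hdist : |a - m| ≤ 1/2 := by simpa using abs_sub_round a
  have hNnn : (0:ℝ) ≤ N := le_trans (abs_nonneg a) ha
  have hmN : -N ≤ m ∧ m ≤ N := by
    have h1 : |(m:ℝ)| - |a| ≤ |a - m| := by
      rw [abs_sub_comm a (m:ℝ)]; exact abs_sub_abs_le_abs_sub _ _
    have h2 : |(m:ℝ)| < N + 1 := by linarith
    have h3l : -((N:ℝ)+1) < m := by linarith [neg_abs_le (m:ℝ), abs_lt.mp h2]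
    have h3r : (m:ℝ) < N + 1 := lt_of_le_of_lt (le_abs_self _) h2
    have h4l : -(N+1) < m := by exact_mod_cast h3l
    have h4r : m < N + 1 := by exact_mod_cast h3r
    omega
  have hbig1 : ∑ k ∈ Finset.Icc (-N) N, ‖g2 (a + (k : ℝ))‖ ^ 2
      = ∑ k ∈ Finset.Icc (-(N+1)) (N+1), ‖g2 (a + (k : ℝ))‖ ^ 2 := by
    apply Finset.sum_subset (Finset.Icc_subset_Icc (by omega) (by omega))
    intro k hk hk'
    simp only [Finset.mem_Icc] at hk hk'
    have hk2 : N + 1 ≤ k ∨ k ≤ -(N+1) := by omega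
    have h3 : (N:ℝ) + 1 ≤ |(k:ℝ)| := by
      rcases hk2 with h | h
      · have h' : (N:ℝ)+1 ≤ (k:ℝ) := by exact_mod_cast h
        exact h'.trans (le_abs_self _)
      · have h' : (k:ℝ) ≤ -((N:ℝ)+1) := by exact_mod_cast h
        have := neg_abs_le (k:ℝ); linarith
    have h5 : (1:ℝ) ≤ |a + k| := by
      have h6 : |(k:ℝ)| - |a| ≤ |(k:ℝ) + a| := by
        have := abs_sub_abs_le_abs_sub (k:ℝ) (-a)
        simp only [abs_neg, sub_neg_eq_add] at this
        linarith
      rw [add_comm] ; linarith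
    rw [h0 _ h5]; simp
  have hbig2 : ∑ k ∈ Finset.Icc (-(N+1)) (N+1), ‖g2 (a + (k : ℝ))‖ ^ 2
      = ∑ k ∈ Finset.Icc (-1 - m) (1 - m), ‖g2 (a + (k : ℝ))‖ ^ 2 := by
    symm
    apply Finset.sum_subset (Finset.Icc_subset_Icc (by omega) (by omega))
    intro k hk hk'
    simp only [Finset.mem_Icc] at hk hk'
    have hk2 : 2 ≤ k + m ∨ k + m ≤ -2 := by omega
    have h3 : (2:ℝ) ≤ |((k+m : ℤ):ℝ)| := by
      rcases hk2 with h | h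
      · have h' : (2:ℝ) ≤ ((k+m:ℤ):ℝ) := by exact_mod_cast h
        exact h'.trans (le_abs_self _)
      · have h' : ((k+m:ℤ):ℝ) ≤ -2 := by exact_mod_cast h
        have := neg_abs_le ((k+m:ℤ):ℝ); linarith
    have h5 : (1:ℝ) ≤ |a + k| := by
      have heq : a + (k:ℝ) = ((k+m:ℤ):ℝ) + (a - m) := by push_cast; ring
      have h6 := abs_sub_abs_le_abs_sub ((k+m:ℤ):ℝ) (-(a - m))
      simp only [abs_neg, sub_neg_eq_add] at h6
      rw [heq]
      linarith
    rw [h0 _ h5]; simp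
  have hshift : ∑ k ∈ Finset.Icc (-1 - m) (1 - m), ‖g2 (a + (k : ℝ))‖ ^ 2
      = ∑ l ∈ Finset.Icc (-1 : ℤ) 1, ‖g2 ((a - m) + (l : ℝ))‖ ^ 2 := by
    apply Finset.sum_nbij' (fun k => k + m) (fun l => l - m)
    · intro k hk; simp only [Finset.mem_Icc] at *; omega
    · intro l hl; simp only [Finset.mem_Icc] at *; omega
    · intro k hk; omega
    · intro l hl; omega
    · intro k hk; congr 2; push_cast; ring
  rw [hbig1, hbig2, hshift]
  exact hpart2 (a - m) (by linarith)

/-- The band-limited 3D shearlet generator yields a partition of unity on the pyramid `P`: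
for `ξ ∈ P`, `Σ_{j≥0} Σ_{|k₁|,|k₂| ≤ ⌈2^{j/2}⌉} |ψ̂(S_kᵀ A_{2^j}^{-1} ξ)|² = 1`. -/
theorem stmt_15 (g1 g2 : ℝ → ℂ)
    (hc1 : ContDiff ℝ (⊤ : ℕ∞) g1) (hc2 : ContDiff ℝ (⊤ : ℕ∞) g2)
    (hsupp1 : ∀ ξ : ℝ,
      ξ ∉ Set.Icc (-4 : ℝ) (-(1 / 2)) ∪ Set.Icc (1 / 2 : ℝ) 4 → g1 ξ = 0)
    (hpart1 : ∀ ξ : ℝ, 1 ≤ |ξ| → (∑' j : ℕ, ‖g1 ((2 : ℝ) ^ (-(j : ℝ)) * ξ)‖ ^ 2) = 1)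
    (hsupp2 : ∀ ξ : ℝ, ξ ∉ Set.Icc (-1 : ℝ) 1 → g2 ξ = 0)
    (hpart2 : ∀ ξ : ℝ, |ξ| ≤ 1 →
      ∑ l ∈ Finset.Icc (-1 : ℤ) 1, ‖g2 (ξ + (l : ℝ))‖ ^ 2 = 1) :
    ∀ ξ₁ ξ₂ ξ₃ : ℝ, 1 ≤ |ξ₁| → |ξ₂ / ξ₁| ≤ 1 → |ξ₃ / ξ₁| ≤ 1 →
      (∑' j : ℕ,
        ∑ k₁ ∈ Finset.Icc (-⌈(2 : ℝ) ^ ((j : ℝ) / 2)⌉) ⌈(2 : ℝ) ^ ((j : ℝ) / 2)⌉,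
          ∑ k₂ ∈ Finset.Icc (-⌈(2 : ℝ) ^ ((j : ℝ) / 2)⌉) ⌈(2 : ℝ) ^ ((j : ℝ) / 2)⌉,
            ‖g1 ((2 : ℝ) ^ (-(j : ℝ)) * ξ₁)‖ ^ 2 *
              ‖g2 ((2 : ℝ) ^ ((j : ℝ) / 2) * (ξ₂ / ξ₁) + (k₁ : ℝ))‖ ^ 2 *
              ‖g2 ((2 : ℝ) ^ ((j : ℝ) / 2) * (ξ₃ / ξ₁) + (k₂ : ℝ))‖ ^ 2) = 1 := by
  intro ξ₁ ξ₂ ξ₃ h1 h2 h3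
  have h0 : ∀ x : ℝ, 1 ≤ |x| → g2 x = 0 := aux_g2_vanish g2 hc2 hsupp2
  have hj : ∀ j : ℕ,
      (∑ k₁ ∈ Finset.Icc (-⌈(2 : ℝ) ^ ((j : ℝ) / 2)⌉) ⌈(2 : ℝ) ^ ((j : ℝ) / 2)⌉,
          ∑ k₂ ∈ Finset.Icc (-⌈(2 : ℝ) ^ ((j : ℝ) / 2)⌉) ⌈(2 : ℝ) ^ ((j : ℝ) / 2)⌉,
            ‖g1 ((2 : ℝ) ^ (-(j : ℝ)) * ξ₁)‖ ^ 2 *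
              ‖g2 ((2 : ℝ) ^ ((j : ℝ) / 2) * (ξ₂ / ξ₁) + (k₁ : ℝ))‖ ^ 2 *
              ‖g2 ((2 : ℝ) ^ ((j : ℝ) / 2) * (ξ₃ / ξ₁) + (k₂ : ℝ))‖ ^ 2)
        = ‖g1 ((2 : ℝ) ^ (-(j : ℝ)) * ξ₁)‖ ^ 2 := by
    intro j
    set N : ℤ := ⌈(2 : ℝ) ^ ((j : ℝ) / 2)⌉ with hN
    have hrpos : (0:ℝ) < (2 : ℝ) ^ ((j : ℝ) / 2) := Real.rpow_pos_of_pos (by norm_num) _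
    have hle : (2 : ℝ) ^ ((j : ℝ) / 2) ≤ N := Int.le_ceil _
    have ha2 : |(2 : ℝ) ^ ((j : ℝ) / 2) * (ξ₂ / ξ₁)| ≤ N := by
      rw [abs_mul, abs_of_pos hrpos]
      calc (2 : ℝ) ^ ((j : ℝ) / 2) * |ξ₂ / ξ₁| ≤ (2 : ℝ) ^ ((j : ℝ) / 2) * 1 := by
            exact mul_le_mul_of_nonneg_left h2 (le_of_lt hrpos)
        _ = (2 : ℝ) ^ ((j : ℝ) / 2) := mul_one _
        _ ≤ N := hle
    have ha3 : |(2 : ℝ) ^ ((j : ℝ) / 2) * (ξ₃ / ξ₁)| ≤ N := by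
      rw [abs_mul, abs_of_pos hrpos]
      calc (2 : ℝ) ^ ((j : ℝ) / 2) * |ξ₃ / ξ₁| ≤ (2 : ℝ) ^ ((j : ℝ) / 2) * 1 := by
            exact mul_le_mul_of_nonneg_left h3 (le_of_lt hrpos)
        _ = (2 : ℝ) ^ ((j : ℝ) / 2) := mul_one _
        _ ≤ N := hle
    have hC : ∑ k₂ ∈ Finset.Icc (-N) N,
        ‖g2 ((2 : ℝ) ^ ((j : ℝ) / 2) * (ξ₃ / ξ₁) + (k₂ : ℝ))‖ ^ 2 = 1 :=
      aux_keysum g2 h0 hpart2 N _ ha3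
    have hB : ∑ k₁ ∈ Finset.Icc (-N) N,
        ‖g2 ((2 : ℝ) ^ ((j : ℝ) / 2) * (ξ₂ / ξ₁) + (k₁ : ℝ))‖ ^ 2 = 1 :=
      aux_keysum g2 h0 hpart2 N _ ha2
    calc (∑ k₁ ∈ Finset.Icc (-N) N, ∑ k₂ ∈ Finset.Icc (-N) N,
            ‖g1 ((2 : ℝ) ^ (-(j : ℝ)) * ξ₁)‖ ^ 2 *
              ‖g2 ((2 : ℝ) ^ ((j : ℝ) / 2) * (ξ₂ / ξ₁) + (k₁ : ℝ))‖ ^ 2 *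
              ‖g2 ((2 : ℝ) ^ ((j : ℝ) / 2) * (ξ₃ / ξ₁) + (k₂ : ℝ))‖ ^ 2)
        = ∑ k₁ ∈ Finset.Icc (-N) N,
            (‖g1 ((2 : ℝ) ^ (-(j : ℝ)) * ξ₁)‖ ^ 2 *
              ‖g2 ((2 : ℝ) ^ ((j : ℝ) / 2) * (ξ₂ / ξ₁) + (k₁ : ℝ))‖ ^ 2) *
            (∑ k₂ ∈ Finset.Icc (-N) N,
              ‖g2 ((2 : ℝ) ^ ((j : ℝ) / 2) * (ξ₃ / ξ₁) + (k₂ : ℝ))‖ ^ 2) := by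
          refine Finset.sum_congr rfl fun k₁ _ => ?_
          rw [Finset.mul_sum]
      _ = ∑ k₁ ∈ Finset.Icc (-N) N,
            ‖g1 ((2 : ℝ) ^ (-(j : ℝ)) * ξ₁)‖ ^ 2 *
              ‖g2 ((2 : ℝ) ^ ((j : ℝ) / 2) * (ξ₂ / ξ₁) + (k₁ : ℝ))‖ ^ 2 := by
          simp only [hC, mul_one]
      _ = ‖g1 ((2 : ℝ) ^ (-(j : ℝ)) * ξ₁)‖ ^ 2 *
            ∑ k₁ ∈ Finset.Icc (-N) N,
              ‖g2 ((2 : ℝ) ^ ((j : ℝ) / 2) * (ξ₂ / ξ₁) + (k₁ : ℝ))‖ ^ 2 := by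
          rw [Finset.mul_sum]
      _ = ‖g1 ((2 : ℝ) ^ (-(j : ℝ)) * ξ₁)‖ ^ 2 := by rw [hB, mul_one]
  calc (∑' j : ℕ,
        ∑ k₁ ∈ Finset.Icc (-⌈(2 : ℝ) ^ ((j : ℝ) / 2)⌉) ⌈(2 : ℝ) ^ ((j : ℝ) / 2)⌉,
          ∑ k₂ ∈ Finset.Icc (-⌈(2 : ℝ) ^ ((j : ℝ) / 2)⌉) ⌈(2 : ℝ) ^ ((j : ℝ) / 2)⌉,
            ‖g1 ((2 : ℝ) ^ (-(j : ℝ)) * ξ₁)‖ ^ 2 *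
              ‖g2 ((2 : ℝ) ^ ((j : ℝ) / 2) * (ξ₂ / ξ₁) + (k₁ : ℝ))‖ ^ 2 *
              ‖g2 ((2 : ℝ) ^ ((j : ℝ) / 2) * (ξ₃ / ξ₁) + (k₂ : ℝ))‖ ^ 2)
      = ∑' j : ℕ, ‖g1 ((2 : ℝ) ^ (-(j : ℝ)) * ξ₁)‖ ^ 2 := tsum_congr hj
    _ = 1 := hpart1 ξ₁ h1
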